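/- Let {a_n}_{n≥1} be a nonnegative real sequence which is a mean value bounded variation sequence (MVBVS) with parameter λ ≥ 2 and constant C > 0, and suppose there exist ε > 0 and n_0 ≥ 1 such that k·a_k < ε for all k ≥ n_0. Then there is a constant C' > 0 (depending only on the sequence and λ) such that for all N ≥ λ·n_0, the tail variation satisfies ∑_{k=N}^∞ |a_k − a_{k+1}| ≤ C'·ε/N. -/

import Mathlib

/-!
On a dyadic block `[n, 2n]` with `n ≥ λ n₀`, the mean value bound controls the variation by
`C/n` times a sum of `a_k` over `[n/λ, λn]`; there every `a_k ≤ ε/⌊n/λ⌋`, and the window has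
`O(λ² ⌊n/λ⌋)` terms, so the block variation is `O(C λ² ε / n)`. Summing these bounds over the
blocks `[2^j N, 2^(j+1) N]` is a geometric series, which gives the `O(ε/N)` bound on the tail.
-/

open Finset

section Dyadic

variable {f : ℕ → ℝ} {B : ℝ} {N : ℕ}

theorem sum_Ico_two_pow_mul_le (hblock : ∀ n, N ≤ n → ∑ k ∈ Ico n (2 * n), f k ≤ B / n)
    (j : ℕ) : ∑ k ∈ Ico N (2 ^ j * N), f k ≤ 2 * B / N - 2 * B / (2 ^ j * N) := by
  induction j with
  | zero => simp
  | succ j ih =>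
    have hle : N ≤ 2 ^ j * N := Nat.le_mul_of_pos_left N (by positivity)
    have hsplit := sum_Ico_consecutive f hle
      (show 2 ^ j * N ≤ 2 ^ (j + 1) * N by rw [pow_succ]; nlinarith)
    have hlast : ∑ k ∈ Ico (2 ^ j * N) (2 ^ (j + 1) * N), f k ≤ B / (2 ^ j * N) := by
      simpa [pow_succ, mul_comm, mul_left_comm] using hblock (2 ^ j * N) hle
    calc ∑ k ∈ Ico N (2 ^ (j + 1) * N), f k
        ≤ (2 * B / N - 2 * B / (2 ^ j * N)) + B / (2 ^ j * N) := by linarith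
      _ = 2 * B / N - 2 * B / (2 ^ (j + 1) * N) := by ring

theorem summable_and_tsum_le_of_dyadic_block_le (hf : ∀ k, 0 ≤ f k) (hB : 0 ≤ B) (hN : 0 < N)
    (hblock : ∀ n, N ≤ n → ∑ k ∈ Ico n (2 * n), f k ≤ B / n) :
    Summable (fun k ↦ f (N + k)) ∧ ∑' k, f (N + k) ≤ 2 * B / N := by
  have hpartial : ∀ m, ∑ k ∈ range m, f (N + k) ≤ 2 * B / N := by
    intro m
    have hm : N + m ≤ 2 ^ m * N := by
      have := Nat.lt_two_pow_self (n := m)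
      nlinarith
    calc ∑ k ∈ range m, f (N + k) = ∑ k ∈ Ico N (N + m), f k :=
          by rw [sum_Ico_eq_sum_range, Nat.add_sub_cancel_left]
      _ ≤ ∑ k ∈ Ico N (2 ^ m * N), f k :=
          sum_le_sum_of_subset_of_nonneg (Ico_subset_Ico_right hm) fun k _ _ ↦ hf k
      _ ≤ 2 * B / N - 2 * B / (2 ^ m * N) := sum_Ico_two_pow_mul_le hblock m
      _ ≤ 2 * B / N := sub_le_self _ (by positivity)
  have hsum := summable_of_sum_range_le (fun k ↦ hf (N + k)) hpartial
  exact ⟨hsum, hsum.tsum_le_of_sum_range_le hpartial⟩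

end Dyadic

theorem sum_Icc_le_of_mul_le {a : ℕ → ℝ} {ε : ℝ} {m M : ℕ} (hm : 0 < m) (hε : 0 ≤ ε)
    (hsmall : ∀ k, m ≤ k → k * a k ≤ ε) : ∑ k ∈ Icc m M, a k ≤ (M + 1) * (ε / m) := by
  have hterm : ∀ k ∈ Icc m M, a k ≤ ε / m := by
    intro k hk
    have hmk : m ≤ k := (mem_Icc.mp hk).1
    have hk : (0 : ℝ) < k := by exact_mod_cast hm.trans_le hmk
    calc a k ≤ ε / k := by rw [le_div_iff₀ hk, mul_comm]; exact hsmall k hmk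
      _ ≤ ε / m := div_le_div_of_nonneg_left hε (by exact_mod_cast hm) (by exact_mod_cast hmk)
  calc ∑ k ∈ Icc m M, a k ≤ #(Icc m M) • (ε / m) := sum_le_card_nsmul _ _ _ hterm
    _ ≤ (M + 1) * (ε / m) := by
      rw [nsmul_eq_mul, Nat.card_Icc]
      gcongr
      exact_mod_cast Nat.sub_le _ _

theorem floor_mul_add_one_le_mul_floor_div {lam : ℝ} {n : ℕ} (hlam : 1 ≤ lam)
    (hm : 1 ≤ ⌊(n : ℝ) / lam⌋₊) :
    (⌊lam * n⌋₊ + 1 : ℝ) ≤ 4 * lam ^ 2 * ⌊(n : ℝ) / lam⌋₊ := by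
  set m := ⌊(n : ℝ) / lam⌋₊
  have hmR : (1 : ℝ) ≤ m := by exact_mod_cast hm
  have hlt : (n : ℝ) / lam < m + 1 := Nat.lt_floor_add_one _
  have hn : (n : ℝ) < 2 * lam * m := by
    rw [div_lt_iff₀ (by linarith)] at hlt
    nlinarith
  have hM : (⌊lam * n⌋₊ : ℝ) ≤ lam * n := Nat.floor_le (by positivity)
  nlinarith

theorem sum_Icc_floor_div_floor_mul_le {a : ℕ → ℝ} {lam ε : ℝ} {n₀ n : ℕ} (hlam : 1 ≤ lam)
    (hε : 0 ≤ ε) (hn₀ : 1 ≤ n₀) (hsmall : ∀ k, n₀ ≤ k → k * a k ≤ ε) (hn : lam * n₀ ≤ n) :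
    ∑ k ∈ Icc ⌊(n : ℝ) / lam⌋₊ ⌊lam * n⌋₊, a k ≤ 4 * lam ^ 2 * ε := by
  have hmn₀ : n₀ ≤ ⌊(n : ℝ) / lam⌋₊ :=
    Nat.le_floor (by rw [le_div_iff₀ (by linarith)]; linarith)
  have hm : 0 < ⌊(n : ℝ) / lam⌋₊ := hn₀.trans hmn₀
  calc ∑ k ∈ Icc ⌊(n : ℝ) / lam⌋₊ ⌊lam * n⌋₊, a k
      ≤ (⌊lam * n⌋₊ + 1) * (ε / ⌊(n : ℝ) / lam⌋₊) :=
        sum_Icc_le_of_mul_le hm hε fun k hk ↦ hsmall k (hmn₀.trans hk)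
    _ ≤ 4 * lam ^ 2 * ⌊(n : ℝ) / lam⌋₊ * (ε / ⌊(n : ℝ) / lam⌋₊) := by
        gcongr
        exact floor_mul_add_one_le_mul_floor_div hlam hm
    _ = 4 * lam ^ 2 * ε := by field_simp

theorem stmt15 (a : ℕ → ℝ)
    (lam : ℝ) (hlam : 2 ≤ lam) (C : ℝ) (hC : 0 < C)
    (hMVBV : ∀ n : ℕ, 1 ≤ n →
      ∑ k ∈ Finset.Icc n (2 * n), |a k - a (k + 1)| ≤
        (C / n) * ∑ k ∈ Finset.Icc ⌊(n : ℝ) / lam⌋₊ ⌊lam * n⌋₊, a k)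
    (ε : ℝ) (hε : 0 < ε) (n₀ : ℕ) (hn₀ : 1 ≤ n₀)
    (hsmall : ∀ k : ℕ, n₀ ≤ k → (k : ℝ) * a k < ε) :
    ∃ C' : ℝ, 0 < C' ∧ ∀ N : ℕ, lam * n₀ ≤ (N : ℝ) →
      (Summable fun k : ℕ => |a (N + k) - a (N + k + 1)|) ∧
      ∑' k : ℕ, |a (N + k) - a (N + k + 1)| ≤ C' * ε / N := by
  refine ⟨8 * C * lam ^ 2, by positivity, fun N hN ↦ ?_⟩
  have hNpos : 0 < N := by
    have : (1 : ℝ) ≤ n₀ := by exact_mod_cast hn₀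
    exact_mod_cast (show (0 : ℝ) < N by nlinarith)
  have hblock : ∀ n, N ≤ n →
      ∑ k ∈ Ico n (2 * n), |a k - a (k + 1)| ≤ 4 * C * lam ^ 2 * ε / n := by
    intro n hNn
    have hn : lam * n₀ ≤ n := hN.trans (by exact_mod_cast hNn)
    calc ∑ k ∈ Ico n (2 * n), |a k - a (k + 1)|
        ≤ ∑ k ∈ Icc n (2 * n), |a k - a (k + 1)| :=
          sum_le_sum_of_subset_of_nonneg Ico_subset_Icc_self fun _ _ _ ↦ abs_nonneg _
      _ ≤ C / n * (4 * lam ^ 2 * ε) := by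
          refine (hMVBV n (hNpos.trans_le hNn)).trans ?_
          gcongr
          exact sum_Icc_floor_div_floor_mul_le (by linarith) hε.le hn₀
            (fun k hk ↦ (hsmall k hk).le) hn
      _ = 4 * C * lam ^ 2 * ε / n := by ring
  obtain ⟨hsum, htsum⟩ := summable_and_tsum_le_of_dyadic_block_le (fun _ ↦ abs_nonneg _)
    (by positivity) hNpos hblock
  exact ⟨hsum, htsum.trans_eq (by ring)⟩
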